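/- Let n ≥ 1, let E, F ⊂ ℝⁿ be non-empty compact sets and let λ > 0. Then for all x ∈ ℝⁿ, |I_λ(x; E) − I_λ(x; F)| ≤ 12√λ · dist_H(E, F), i.e. the intersection extraction transform is Hausdorff-Lipschitz continuous with constant 12√λ. -/

import Mathlib

/-!
Completing the square turns an affine minorant `ℓ` of `λ|·|² - χ_F` into a paraboloid
`λ|· - p|² + b ≥ χ_F` with `b ≥ 0`, and such a paraboloid is at least `1 - 2√λ δ` at every point
within `δ` of `F`. Hence, when `E` lies in the closed `δ`-neighbourhood of `F`, `ℓ - 2√λ δ` is a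
minorant of `λ|·|² - χ_E`, so `C^u_λ(χ_E) ≤ C^u_λ(χ_F) + 2√λ δ`. The lower transform is
nonexpansive in the sup norm, and the three terms of `I_λ` contribute
`2√(4λ) δ + 2 (2√λ δ + 2√λ δ) = 12√λ δ`.
-/

/-- Convex envelope: pointwise sup of affine minorants. -/
noncomputable def convEnv {n : ℕ} (g : EuclideanSpace ℝ (Fin n) → ℝ)
    (x : EuclideanSpace ℝ (Fin n)) : ℝ :=
  sSup {a : ℝ | ∃ ℓ : EuclideanSpace ℝ (Fin n) →ᵃ[ℝ] ℝ, (∀ y, ℓ y ≤ g y) ∧ a = ℓ x}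

/-- Lower compensated convex transform. -/
noncomputable def lowerT {n : ℕ} (lam : ℝ) (f : EuclideanSpace ℝ (Fin n) → ℝ)
    (x : EuclideanSpace ℝ (Fin n)) : ℝ :=
  convEnv (fun y => f y + lam * ‖y‖ ^ 2) x - lam * ‖x‖ ^ 2

/-- Upper compensated convex transform. -/
noncomputable def upperT {n : ℕ} (lam : ℝ) (f : EuclideanSpace ℝ (Fin n) → ℝ)
    (x : EuclideanSpace ℝ (Fin n)) : ℝ :=
  lam * ‖x‖ ^ 2 - convEnv (fun y => lam * ‖y‖ ^ 2 - f y) x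

/-- Characteristic function of a set: `χ_K(x) = 1` if `x ∈ K`, `0` otherwise. -/
noncomputable def chi {n : ℕ} (K : Set (EuclideanSpace ℝ (Fin n)))
    (x : EuclideanSpace ℝ (Fin n)) : ℝ :=
  K.indicator (fun _ => (1 : ℝ)) x

/-- Intersection extraction transform
`I_λ(x; K) = |C^u_{4λ}(χ_K)(x) − 2(C^u_λ(χ_K)(x) − C^l_λ(C^u_λ(χ_K))(x))|`. -/
noncomputable def interT {n : ℕ} (lam : ℝ) (K : Set (EuclideanSpace ℝ (Fin n)))
    (x : EuclideanSpace ℝ (Fin n)) : ℝ :=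
  |upperT (4 * lam) (chi K) x -
    2 * (upperT lam (chi K) x - lowerT lam (fun y => upperT lam (chi K) y) x)|

open Metric

theorem one_sub_two_mul_le_sq_add {a c d b : ℝ} (ha : 0 ≤ a) (hd : 0 ≤ d)
    (hb : 0 ≤ b) (hab : 1 ≤ a ^ 2 + b) (hac : a ≤ c + d) : 1 - 2 * d ≤ c ^ 2 + b := by
  rcases le_total 1 a with h1 | h1
  · rcases le_total 1 d with h2 | h2 <;> nlinarith
  · rcases le_total d a with h2 | h2 <;> nlinarith

theorem AffineMap.exists_mul_norm_sq_sub_eq {E : Type*} [NormedAddCommGroup E]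
    [InnerProductSpace ℝ E] [FiniteDimensional ℝ E] {lam : ℝ} (hlam : lam ≠ 0)
    (ℓ : E →ᵃ[ℝ] ℝ) :
    ∃ (p : E) (b : ℝ), ∀ w, lam * ‖w‖ ^ 2 - ℓ w = lam * ‖w - p‖ ^ 2 + b := by
  set v : E := (InnerProductSpace.toDual ℝ E).symm (LinearMap.toContinuousLinearMap ℓ.linear)
  have hv : ∀ w, inner ℝ v w = ℓ.linear w := fun w => by simp [v]
  refine ⟨(2 * lam)⁻¹ • v, -(lam * ‖(2 * lam)⁻¹ • v‖ ^ 2 + ℓ 0), fun w => ?_⟩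
  have hℓ : ℓ w = ℓ.linear w + ℓ 0 := by simpa using ℓ.map_vadd 0 w
  rw [norm_sub_sq_real, real_inner_smul_right, real_inner_comm, hv, hℓ]
  field_simp
  ring

theorem Metric.exists_mem_dist_le_hausdorffDist {α : Type*} [PseudoMetricSpace α]
    {s t : Set α} (hs : s.Nonempty) (ht : t.Nonempty) (hsb : Bornology.IsBounded s)
    (htc : IsCompact t) {x : α} (hx : x ∈ s) : ∃ y ∈ t, dist x y ≤ hausdorffDist s t := by
  obtain ⟨y, hy, hxy⟩ := htc.exists_infDist_eq_dist ht x
  exact ⟨y, hy, hxy ▸ infDist_le_hausdorffDist_of_mem hx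
    (hausdorffEDist_ne_top_of_nonempty_of_bounded hs ht hsb htc.isBounded)⟩

section CompensatedConvexTransforms

variable {n : ℕ}

theorem le_convEnv {g : EuclideanSpace ℝ (Fin n) → ℝ} (ℓ : EuclideanSpace ℝ (Fin n) →ᵃ[ℝ] ℝ)
    (hℓ : ∀ y, ℓ y ≤ g y) (x : EuclideanSpace ℝ (Fin n)) : ℓ x ≤ convEnv g x :=
  le_csSup ⟨g x, by rintro _ ⟨ℓ', hℓ', rfl⟩; exact hℓ' x⟩ ⟨ℓ, hℓ, rfl⟩

theorem convEnv_le_of_forall {g : EuclideanSpace ℝ (Fin n) → ℝ} {x : EuclideanSpace ℝ (Fin n)}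
    {c : ℝ} (hg : BddBelow (Set.range g))
    (h : ∀ ℓ : EuclideanSpace ℝ (Fin n) →ᵃ[ℝ] ℝ, (∀ y, ℓ y ≤ g y) → ℓ x ≤ c) :
    convEnv g x ≤ c := by
  obtain ⟨m, hm⟩ := hg
  refine csSup_le ⟨m, AffineMap.const ℝ _ m, fun y => hm ⟨y, rfl⟩, rfl⟩ ?_
  rintro _ ⟨ℓ, hℓ, rfl⟩
  exact h ℓ hℓ

theorem convEnv_le_self {g : EuclideanSpace ℝ (Fin n) → ℝ} (hg : BddBelow (Set.range g))
    (x : EuclideanSpace ℝ (Fin n)) : convEnv g x ≤ g x :=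
  convEnv_le_of_forall hg fun _ hℓ => hℓ x

theorem convEnv_le_add {g h : EuclideanSpace ℝ (Fin n) → ℝ} {c : ℝ}
    (hg : BddBelow (Set.range g))
    (hgh : ∀ ℓ : EuclideanSpace ℝ (Fin n) →ᵃ[ℝ] ℝ, (∀ y, ℓ y ≤ g y) → ∀ y, ℓ y - c ≤ h y)
    (x : EuclideanSpace ℝ (Fin n)) : convEnv g x ≤ convEnv h x + c :=
  convEnv_le_of_forall hg fun ℓ hℓ => by
    have := le_convEnv (ℓ - AffineMap.const ℝ _ c) (hgh ℓ hℓ) x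
    simp only [AffineMap.coe_sub, Pi.sub_apply, AffineMap.const_apply] at this
    linarith

theorem convEnv_le_add_of_le {g h : EuclideanSpace ℝ (Fin n) → ℝ} {c : ℝ}
    (hg : BddBelow (Set.range g)) (hgh : ∀ y, g y ≤ h y + c) (x : EuclideanSpace ℝ (Fin n)) :
    convEnv g x ≤ convEnv h x + c :=
  convEnv_le_add hg (fun _ hℓ y => by linarith [hℓ y, hgh y]) x

theorem lowerT_le_add {lam c : ℝ} (hlam : 0 ≤ lam) {u w : EuclideanSpace ℝ (Fin n) → ℝ}
    (hu : BddBelow (Set.range u)) (huw : ∀ y, u y ≤ w y + c) (x : EuclideanSpace ℝ (Fin n)) :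
    lowerT lam u x ≤ lowerT lam w x + c := by
  obtain ⟨m, hm⟩ := hu
  have hbdd : BddBelow (Set.range fun y => u y + lam * ‖y‖ ^ 2) :=
    ⟨m, by
      rintro _ ⟨y, rfl⟩
      nlinarith [hm ⟨y, rfl⟩, mul_nonneg hlam (sq_nonneg ‖y‖)]⟩
  have := convEnv_le_add_of_le hbdd (fun y => by linarith [huw y] : ∀ y,
    u y + lam * ‖y‖ ^ 2 ≤ w y + lam * ‖y‖ ^ 2 + c) x
  unfold lowerT
  linarith

theorem chi_nonneg (K : Set (EuclideanSpace ℝ (Fin n))) (y : EuclideanSpace ℝ (Fin n)) :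
    0 ≤ chi K y :=
  Set.indicator_nonneg (fun _ _ => zero_le_one) y

theorem chi_le_one (K : Set (EuclideanSpace ℝ (Fin n))) (y : EuclideanSpace ℝ (Fin n)) :
    chi K y ≤ 1 :=
  Set.indicator_le_self' (fun _ _ => zero_le_one) y

theorem bddBelow_range_mul_norm_sq_sub_chi {lam : ℝ} (hlam : 0 ≤ lam)
    (K : Set (EuclideanSpace ℝ (Fin n))) :
    BddBelow (Set.range fun y => lam * ‖y‖ ^ 2 - chi K y) :=
  ⟨-1, by
    rintro _ ⟨y, rfl⟩
    nlinarith [chi_le_one K y, mul_nonneg hlam (sq_nonneg ‖y‖)]⟩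

theorem upperT_chi_nonneg {lam : ℝ} (hlam : 0 ≤ lam) (K : Set (EuclideanSpace ℝ (Fin n)))
    (x : EuclideanSpace ℝ (Fin n)) : 0 ≤ upperT lam (chi K) x := by
  have := convEnv_le_self (bddBelow_range_mul_norm_sq_sub_chi hlam K) x
  unfold upperT
  linarith [chi_nonneg K x]

theorem affineMap_sub_le_mul_norm_sq_sub_one {lam δ : ℝ} (hlam : 0 < lam) (hδ : 0 ≤ δ)
    {F : Set (EuclideanSpace ℝ (Fin n))} {ℓ : EuclideanSpace ℝ (Fin n) →ᵃ[ℝ] ℝ}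
    (hℓ : ∀ w, ℓ w ≤ lam * ‖w‖ ^ 2 - chi F w) {y z : EuclideanSpace ℝ (Fin n)} (hz : z ∈ F)
    (hyz : dist y z ≤ δ) : ℓ y - 2 * √lam * δ ≤ lam * ‖y‖ ^ 2 - 1 := by
  obtain ⟨p, b, hpb⟩ := ℓ.exists_mul_norm_sq_sub_eq hlam.ne'
  have hb : 0 ≤ b := by
    have := hpb p
    rw [sub_self, norm_zero] at this
    linarith [hℓ p, chi_nonneg F p]
  have hzp : 1 ≤ (√lam * ‖z - p‖) ^ 2 + b := by
    have := hℓ z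
    rw [chi, Set.indicator_of_mem hz] at this
    rw [mul_pow, Real.sq_sqrt hlam.le]
    linarith [hpb z]
  have hzy : √lam * ‖z - p‖ ≤ √lam * ‖y - p‖ + √lam * δ := by
    rw [← mul_add]
    gcongr
    calc ‖z - p‖ ≤ ‖z - y‖ + ‖y - p‖ := norm_sub_le_norm_sub_add_norm_sub z y p
      _ ≤ ‖y - p‖ + δ := by rw [← dist_eq_norm, dist_comm]; linarith
  have := one_sub_two_mul_le_sq_add (by positivity) (by positivity) hb hzp hzy
  rw [mul_pow, Real.sq_sqrt hlam.le] at this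
  linarith [hpb y]

theorem upperT_chi_le_add {lam δ : ℝ} (hlam : 0 < lam) (hδ : 0 ≤ δ)
    {E F : Set (EuclideanSpace ℝ (Fin n))} (hEF : ∀ y ∈ E, ∃ z ∈ F, dist y z ≤ δ)
    (x : EuclideanSpace ℝ (Fin n)) :
    upperT lam (chi E) x ≤ upperT lam (chi F) x + 2 * √lam * δ := by
  suffices hshift : ∀ ℓ : EuclideanSpace ℝ (Fin n) →ᵃ[ℝ] ℝ,
      (∀ w, ℓ w ≤ lam * ‖w‖ ^ 2 - chi F w) → ∀ y, ℓ y - 2 * √lam * δ ≤ lam * ‖y‖ ^ 2 - chi E y by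
    have := convEnv_le_add (bddBelow_range_mul_norm_sq_sub_chi hlam.le F) hshift x
    unfold upperT
    linarith
  intro ℓ hℓ y
  by_cases hy : y ∈ E
  · obtain ⟨z, hz, hyz⟩ := hEF y hy
    rw [chi, Set.indicator_of_mem hy]
    exact affineMap_sub_le_mul_norm_sq_sub_one hlam hδ hℓ hz hyz
  · rw [chi, Set.indicator_of_notMem hy]
    have : 0 ≤ 2 * √lam * δ := by positivity
    linarith [hℓ y, chi_nonneg F y]

theorem abs_interT_sub_interT_le {lam δ : ℝ} (hlam : 0 < lam) (hδ : 0 ≤ δ)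
    {E F : Set (EuclideanSpace ℝ (Fin n))} (hEF : ∀ y ∈ E, ∃ z ∈ F, dist y z ≤ δ)
    (hFE : ∀ y ∈ F, ∃ z ∈ E, dist y z ≤ δ) (x : EuclideanSpace ℝ (Fin n)) :
    |interT lam E x - interT lam F x| ≤ 12 * √lam * δ := by
  have hsqrt : √(4 * lam) = 2 * √lam := by
    rw [Real.sqrt_mul zero_le_four, show (4 : ℝ) = 2 ^ 2 by norm_num, Real.sqrt_sq zero_le_two]
  have u4EF := upperT_chi_le_add (lam := 4 * lam) (by positivity) hδ hEF x
  have u4FE := upperT_chi_le_add (lam := 4 * lam) (by positivity) hδ hFE x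
  rw [hsqrt] at u4EF u4FE
  have uEF := upperT_chi_le_add hlam hδ hEF
  have uFE := upperT_chi_le_add hlam hδ hFE
  have lEF := lowerT_le_add hlam.le
    ⟨0, Set.forall_mem_range.2 (upperT_chi_nonneg hlam.le E)⟩ uEF x
  have lFE := lowerT_le_add hlam.le
    ⟨0, Set.forall_mem_range.2 (upperT_chi_nonneg hlam.le F)⟩ uFE x
  refine (abs_abs_sub_abs_le_abs_sub _ _).trans (abs_sub_le_iff.2 ⟨?_, ?_⟩) <;>
    linarith [uEF x, uFE x]

end CompensatedConvexTransforms

theorem interT_hausdorff_lipschitz_general (n : ℕ)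
    (E F : Set (EuclideanSpace ℝ (Fin n))) (hE : E.Nonempty) (hF : F.Nonempty)
    (hEc : IsCompact E) (hFc : IsCompact F)
    (lam : ℝ) (hlam : 0 < lam) (x : EuclideanSpace ℝ (Fin n)) :
    |interT lam E x - interT lam F x| ≤
      12 * Real.sqrt lam * Metric.hausdorffDist E F :=
  abs_interT_sub_interT_le hlam hausdorffDist_nonneg
    (fun _ hy => exists_mem_dist_le_hausdorffDist hE hF hEc.isBounded hFc hy)
    (fun _ hy => hausdorffDist_comm (s := E) ▸
      exists_mem_dist_le_hausdorffDist hF hE hFc.isBounded hEc hy) x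

/-- Hausdorff-Lipschitz continuity of the intersection extraction transform. -/
theorem interT_hausdorff_lipschitz (n : ℕ) (hn : 1 ≤ n)
    (E F : Set (EuclideanSpace ℝ (Fin n))) (hE : E.Nonempty) (hF : F.Nonempty)
    (hEc : IsCompact E) (hFc : IsCompact F)
    (lam : ℝ) (hlam : 0 < lam) (x : EuclideanSpace ℝ (Fin n)) :
    |interT lam E x - interT lam F x| ≤
      12 * Real.sqrt lam * Metric.hausdorffDist E F :=
  interT_hausdorff_lipschitz_general n E F hE hF hEc hFc lam hlam x
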